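/- Fix a ladder system on ω₁. Let u = (u_α)_{α<ω₁} be a sequence of nonprincipal ultrafilters in βℕ, let X ⊆ ω₁, let f^X be an admissible family for the X-modification u^X, and write v_{X,α} := f̃^X_α(u^X_α). Then for every α < ω₁ and every weak P-point w ∈ βℕ, if w ≤_C v_{X,α} then there exists β ≤ α with β ∈ X ∪ Lim(ω₁) such that w ≤_RK u_β. -/

import Mathlib

/-- The tensor (Fubini) product of ultrafilters: `S ∈ tensor u v` iff
`{x | {y | (x, y) ∈ S} ∈ v} ∈ u`. -/
def tensor {X Y : Type*} (u : Ultrafilter X) (v : Ultrafilter Y) : Ultrafilter (X × Y) :=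
  u.bind fun x => v.map fun y => (x, y)

/-- The Rudin–Keisler preorder: `u ≤_RK v` iff `u` is the image of `v` under some map. -/
def RKLE {X Y : Type*} (u : Ultrafilter X) (v : Ultrafilter Y) : Prop :=
  ∃ f : Y → X, Ultrafilter.map f v = u

/-- Isomorphism of ultrafilters: image under a bijection. -/
def UIso {X Y : Type*} (u : Ultrafilter X) (v : Ultrafilter Y) : Prop :=
  ∃ f : Y → X, Function.Bijective f ∧ Ultrafilter.map f v = u

/-- An ultrafilter is principal iff it is `pure x` for some point `x`. -/
def IsPrincipal {X : Type*} (u : Ultrafilter X) : Prop := ∃ x, u = pure x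

/-- A weak P-point: a nonprincipal ultrafilter on `ℕ` not in the closure of any countable
set of ultrafilters avoiding it and all principal ultrafilters. -/
def WeakPPoint (u : Ultrafilter ℕ) : Prop :=
  ¬ IsPrincipal u ∧ ∀ A : Set (Ultrafilter ℕ), A.Countable → u ∉ A →
    (∀ x ∈ A, ¬ IsPrincipal x) → u ∉ closure A

/-- A space `Z` is `u`-compact iff every pushforward of `u` to `Z` converges. -/
def UCompact {X : Type*} (u : Ultrafilter X) (Z : Type*) [TopologicalSpace Z] : Prop :=
  ∀ f : X → Z, ∃ z : Z, ↑(Ultrafilter.map f u) ≤ nhds z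

/-- The Comfort preorder: `u ≤_C v` iff every `v`-compact space is `u`-compact. -/
def ComfortLE {X Y : Type*} (u : Ultrafilter X) (v : Ultrafilter Y) : Prop :=
  ∀ (Z : Type*) [TopologicalSpace Z], UCompact v Z → UCompact u Z

/-- The first uncountable ordinal `ω₁`. -/
noncomputable def omega1 : Ordinal := (Cardinal.aleph 1).ord

/-- A ladder system on `ω₁`: for each nonzero limit `α < ω₁`, a strictly increasing
`ω`-sequence of ordinals cofinal in `α`. -/
def IsLadderSystem (L : Ordinal → ℕ → Ordinal) : Prop :=
  ∀ α : Ordinal, α < omega1 → Order.IsSuccLimit α →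
    StrictMono (L α) ∧ (∀ i : ℕ, L α i < α) ∧ ∀ β < α, ∃ i : ℕ, β ≤ L α i

/-- `vSeq u f α = f̃_α(u_α)`. -/
noncomputable def vSeq (u : Ordinal → Ultrafilter ℕ) (f : Ordinal → ℕ → Ultrafilter ℕ)
    (α : Ordinal) : Ultrafilter ℕ :=
  Ultrafilter.extend (f α) (u α)

/-- `(f_α)_{α<ω₁}` is admissible for `u = (u_α)_{α<ω₁}` (w.r.t. the ladder system `L`):
writing `v_α := f̃_α(u_α)`, the map `f_0` is injective with principal values; at a successor
`β+1`, `f_{β+1}` is injective with discrete range and all values isomorphic to `v_β`; at a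
nonzero limit `α`, `f_α` is injective with discrete range and `f_α(i) ≅ v_{α_i}`. -/
def Admissible (L : Ordinal → ℕ → Ordinal) (u : Ordinal → Ultrafilter ℕ)
    (f : Ordinal → ℕ → Ultrafilter ℕ) : Prop :=
  (Function.Injective (f 0) ∧ ∀ i : ℕ, IsPrincipal (f 0 i)) ∧
  (∀ β : Ordinal, β + 1 < omega1 →
    Function.Injective (f (β + 1)) ∧ DiscreteTopology (Set.range (f (β + 1))) ∧
    ∀ i : ℕ, UIso (f (β + 1) i) (vSeq u f β)) ∧
  ∀ α : Ordinal, α < omega1 → Order.IsSuccLimit α →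
    Function.Injective (f α) ∧ DiscreteTopology (Set.range (f α)) ∧
    ∀ i : ℕ, UIso (f α i) (vSeq u f (L α i))

open Classical in
/-- The `X`-modification of `u`: keep `u_α` for `α ∈ X ∪ Lim(ω₁)` and replace the
remaining values by the principal ultrafilter `pure 0`. -/
noncomputable def modif (u : Ordinal → Ultrafilter ℕ) (X : Set Ordinal)
    (α : Ordinal) : Ultrafilter ℕ :=
  if α ∈ X ∨ (Order.IsSuccLimit α ∧ α < omega1) then u α else pure 0

/-! For a weak P-point `w`, let `Z_w ⊆ βℕ` be the subspace of ultrafilters that are not RK-above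
`w`. If `w ≤_RK q-∑ tᵢ`, then `w ≤_RK q` or `w ≤_RK tᵢ` for some `i`: otherwise `w` lies in the
closure of the countable set of the nonprincipal `tᵢ ≠ w`. Hence `Z_w` is `q`-compact for every
`q ∈ Z_w` (the limit of `map f q` is the sum `q-∑ f(i)`). Since `q`-compactness passes to
RK-predecessors and to sums, a failure of the conclusion would make `Z_w` `v_{X,α}`-compact by
induction along the admissible family, hence `w`-compact; but the only limit of `n ↦ pure n`
along `w` is `w` itself. -/

universe u v

open Filter Set Topology

namespace Ultrafilter

variable {α β γ : Type*}

theorem map_bind (g : β → γ) (u : Ultrafilter α) (t : α → Ultrafilter β) :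
    (u.bind t).map g = u.bind fun i => (t i).map g :=
  rfl

theorem map_le_nhds_bind (u : Ultrafilter α) (t : α → Ultrafilter β) :
    ↑(u.map t) ≤ 𝓝 (u.bind t) :=
  ultrafilter_converges_iff.mpr rfl

theorem extend_eq_bind (t : α → Ultrafilter β) (u : Ultrafilter α) :
    Ultrafilter.extend t u = u.bind t :=
  ultrafilter_extend_eq_iff.mpr (map_le_nhds_bind u t)

theorem bind_mem_closure_image {u : Ultrafilter α} (t : α → Ultrafilter β) {A : Set α}
    (hA : A ∈ u) : u.bind t ∈ closure (t '' A) := by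
  rw [ultrafilterBasis_is_basis.mem_closure_iff]
  rintro _ ⟨s, rfl⟩ (hs : {i | s ∈ t i} ∈ u)
  obtain ⟨i, hiA, hi⟩ := nonempty_of_mem (inter_mem hA hs)
  exact ⟨t i, hi, mem_image_of_mem t hiA⟩

end Ultrafilter

section RudinKeisler

variable {X Y : Type*}

theorem not_rkle_pure {w : Ultrafilter X} (hw : ¬ IsPrincipal w) (y : Y) :
    ¬ RKLE w (pure y) := by
  rintro ⟨g, hg⟩
  exact hw ⟨g y, by rw [← hg, Ultrafilter.map_pure]⟩

theorem rkle_bind_of_eventually_principal {q : Ultrafilter Y} {t : Y → Ultrafilter X}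
    (h : {i | IsPrincipal (t i)} ∈ q) : RKLE (q.bind t) q := by
  have hm : ∀ i, ∃ x, IsPrincipal (t i) → t i = pure x := by
    intro i
    by_cases hi : IsPrincipal (t i)
    · exact hi.imp fun _ hx _ => hx
    · exact ⟨(Ultrafilter.nonempty_of_mem (univ_mem : univ ∈ t i)).some, fun h => absurd h hi⟩
  choose m hm using hm
  refine ⟨m, Ultrafilter.coe_le_coe.mp fun s (hs : {i | s ∈ t i} ∈ q) => ?_⟩
  show m ⁻¹' s ∈ q
  filter_upwards [inter_mem h hs] with i ⟨hip, (his : s ∈ t i)⟩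
  rwa [hm i hip, Ultrafilter.mem_pure] at his

end RudinKeisler

section UCompact

variable {X Y : Type*} {Z : Type*} [TopologicalSpace Z]

theorem uCompact_pure (x : X) : UCompact (pure x) Z :=
  fun f => ⟨f x, by rw [Ultrafilter.map_pure]; exact pure_le_nhds (f x)⟩

theorem UCompact.of_rkle {p : Ultrafilter X} {q : Ultrafilter Y} (h : RKLE p q)
    (hq : UCompact q Z) : UCompact p Z := by
  obtain ⟨g, rfl⟩ := h
  intro f
  obtain ⟨z, hz⟩ := hq (f ∘ g)
  exact ⟨z, by rwa [Ultrafilter.map_map]⟩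

theorem UCompact.bind {q : Ultrafilter Y} {t : Y → Ultrafilter X} (hq : UCompact q Z)
    (ht : ∀ i, UCompact (t i) Z) : UCompact (q.bind t) Z := by
  intro f
  choose z hz using fun i => ht i f
  obtain ⟨z₀, hz₀⟩ := hq z
  refine ⟨z₀, fun s hs => ?_⟩
  obtain ⟨V, hVs, hV, hz₀V⟩ := mem_nhds_iff.mp hs
  have hzV : z ⁻¹' V ∈ q := hz₀ (hV.mem_nhds hz₀V)
  show {i | f ⁻¹' s ∈ t i} ∈ q
  filter_upwards [hzV] with i hi
  exact mem_of_superset (hz i (hV.mem_nhds hi)) (preimage_mono hVs)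

theorem UCompact.of_homeomorph {Z' : Type*} [TopologicalSpace Z'] {q : Ultrafilter X}
    (e : Z ≃ₜ Z') (h : UCompact q Z) : UCompact q Z' := by
  intro f
  obtain ⟨z, hz⟩ := h (e.symm ∘ f)
  refine ⟨e z, ?_⟩
  have := (Filter.map_mono hz).trans (e.continuous.tendsto z)
  rwa [← Ultrafilter.coe_map, Ultrafilter.map_map, ← Function.comp_assoc, e.self_comp_symm,
    Function.id_comp] at this

/-- `ComfortLE` only tests spaces of one universe; `ULift` moves `Z` there. -/
theorem ComfortLE.uCompact {X Y : Type*} {w : Ultrafilter X} {q : Ultrafilter Y}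
    {Z : Type u} [TopologicalSpace Z] (hC : ComfortLE.{_, _, max u v} w q) (h : UCompact q Z) :
    UCompact w Z :=
  (hC _ (h.of_homeomorph Homeomorph.ulift.symm)).of_homeomorph Homeomorph.ulift

end UCompact

section WeakPPoint

variable {w : Ultrafilter ℕ}

theorem WeakPPoint.exists_eq_or_rkle_of_bind_eq (hw : WeakPPoint w) {q : Ultrafilter ℕ}
    {t : ℕ → Ultrafilter ℕ} (h : q.bind t = w) : (∃ i, t i = w) ∨ RKLE w q := by
  by_contra! ⟨hne, hnrk⟩
  have hA : {i | ¬ IsPrincipal (t i)} ∈ q := by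
    refine Ultrafilter.compl_mem_iff_notMem.mpr fun hp => hnrk ?_
    exact h ▸ rkle_bind_of_eventually_principal hp
  refine hw.2 (t '' {i | ¬ IsPrincipal (t i)}) (Set.to_countable _ |>.image t) ?_ ?_
    (h ▸ Ultrafilter.bind_mem_closure_image t hA)
  · rintro ⟨i, -, hi⟩
    exact hne i hi
  · rintro _ ⟨i, hi, rfl⟩
    exact hi

theorem WeakPPoint.rkle_or_rkle_of_rkle_bind (hw : WeakPPoint w) {q : Ultrafilter ℕ}
    {t : ℕ → Ultrafilter ℕ} (h : RKLE w (q.bind t)) : RKLE w q ∨ ∃ i, RKLE w (t i) := by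
  obtain ⟨g, hg⟩ := h
  rw [Ultrafilter.map_bind] at hg
  rcases hw.exists_eq_or_rkle_of_bind_eq hg with ⟨i, hi⟩ | hq
  · exact Or.inr ⟨i, g, hi⟩
  · exact Or.inl hq

theorem WeakPPoint.uCompact_not_rkle (hw : WeakPPoint w) {q : Ultrafilter ℕ}
    (hq : ¬ RKLE w q) : UCompact q {p : Ultrafilter ℕ // ¬ RKLE w p} := by
  intro f
  have hbind : ¬ RKLE w (q.bind fun i => (f i).1) := fun h =>
    (hw.rkle_or_rkle_of_rkle_bind h).elim hq fun ⟨i, hi⟩ => (f i).2 hi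
  refine ⟨⟨_, hbind⟩, ?_⟩
  rw [nhds_subtype_eq_comap, ← Filter.map_le_iff_le_comap, ← Ultrafilter.coe_map,
    Ultrafilter.map_map]
  exact Ultrafilter.map_le_nhds_bind q _

end WeakPPoint

theorem not_uCompact_not_rkle {X : Type*} {w : Ultrafilter X} (hw : ¬ IsPrincipal w) :
    ¬ UCompact w {p : Ultrafilter X // ¬ RKLE w p} := by
  intro h
  obtain ⟨z, hz⟩ := h fun x => ⟨pure x, not_rkle_pure hw x⟩
  have hlim := (Filter.map_mono hz).trans (continuous_subtype_val.tendsto z)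
  rw [← Ultrafilter.coe_map, Ultrafilter.map_map] at hlim
  have hzw : z.1 = w := (ultrafilter_converges_iff.mp hlim).trans (bind_pure w)
  exact z.2 ⟨id, by rw [Ultrafilter.map_id, hzw]⟩

section Admissible

variable {L : Ordinal → ℕ → Ordinal} {u : Ordinal → Ultrafilter ℕ}
  {f : Ordinal → ℕ → Ultrafilter ℕ} {Z : Type*} [TopologicalSpace Z]

theorem Admissible.uCompact_vSeq_of_forall_lt (hL : IsLadderSystem L) (hf : Admissible L u f)
    {γ : Ordinal} (hγ : γ < omega1) (hu : UCompact (u γ) Z)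
    (ih : ∀ δ < γ, UCompact (vSeq u f δ) Z) : UCompact (vSeq u f γ) Z := by
  rw [vSeq, Ultrafilter.extend_eq_bind]
  refine hu.bind fun i => ?_
  rcases Ordinal.zero_or_succ_or_isSuccLimit γ with rfl | ⟨δ, rfl⟩ | hlim
  · obtain ⟨n, hn⟩ := hf.1.2 i
    exact hn ▸ uCompact_pure n
  · rw [Order.succ_eq_add_one] at hγ ⊢
    obtain ⟨g, -, hg⟩ := (hf.2.1 δ hγ).2.2 i
    exact (ih δ (Order.lt_succ δ)).of_rkle ⟨g, hg⟩
  · obtain ⟨g, -, hg⟩ := (hf.2.2 γ hγ hlim).2.2 i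
    exact (ih _ ((hL γ hγ hlim).2.1 i)).of_rkle ⟨g, hg⟩

theorem Admissible.uCompact_vSeq (hL : IsLadderSystem L) (hf : Admissible L u f)
    {α : Ordinal} (hα : α < omega1) (hu : ∀ γ ≤ α, UCompact (u γ) Z) :
    ∀ γ ≤ α, UCompact (vSeq u f γ) Z := by
  intro γ
  induction γ using WellFoundedLT.induction with
  | _ γ ih =>
    intro hγ
    exact hf.uCompact_vSeq_of_forall_lt hL (hγ.trans_lt hα) (hu γ hγ)
      fun δ hδ => ih δ hδ (hδ.le.trans hγ)

end Admissible

theorem uCompact_modif {u : Ordinal → Ultrafilter ℕ} {X : Set Ordinal} {Z : Type*}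
    [TopologicalSpace Z] {γ : Ordinal}
    (h : γ ∈ X ∨ (Order.IsSuccLimit γ ∧ γ < omega1) → UCompact (u γ) Z) :
    UCompact (modif u X γ) Z := by
  unfold modif
  split_ifs with hγ
  exacts [h hγ, uCompact_pure 0]

theorem stmt13_general (L : Ordinal → ℕ → Ordinal) (hL : IsLadderSystem L)
    (u : Ordinal → Ultrafilter ℕ)
    (X : Set Ordinal) (fX : Ordinal → ℕ → Ultrafilter ℕ)
    (hfX : Admissible L (modif u X) fX) :
    ∀ α : Ordinal, α < omega1 → ∀ w : Ultrafilter ℕ, WeakPPoint w →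
      ComfortLE w (vSeq (modif u X) fX α) →
      ∃ β ≤ α, (β ∈ X ∨ (Order.IsSuccLimit β ∧ β < omega1)) ∧ RKLE w (u β) := by
  intro α hα w hw hC
  by_contra! hnot
  have hmodif : ∀ γ ≤ α, UCompact (modif u X γ) {p : Ultrafilter ℕ // ¬ RKLE w p} :=
    fun γ hγ => uCompact_modif fun hγX => hw.uCompact_not_rkle (hnot γ hγ hγX)
  exact not_uCompact_not_rkle hw.1 (hC.uCompact (hfX.uCompact_vSeq hL hα hmodif α le_rfl))

theorem stmt13 (L : Ordinal → ℕ → Ordinal) (hL : IsLadderSystem L)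
    (u : Ordinal → Ultrafilter ℕ)
    (hu : ∀ α : Ordinal, α < omega1 → ¬ IsPrincipal (u α))
    (X : Set Ordinal) (fX : Ordinal → ℕ → Ultrafilter ℕ)
    (hfX : Admissible L (modif u X) fX) :
    ∀ α : Ordinal, α < omega1 → ∀ w : Ultrafilter ℕ, WeakPPoint w →
      ComfortLE w (vSeq (modif u X) fX α) →
      ∃ β ≤ α, (β ∈ X ∨ (Order.IsSuccLimit β ∧ β < omega1)) ∧ RKLE w (u β) :=
  stmt13_general L hL u X fX hfX
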